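/- Let (F,R) and (M,d) be separable metric spaces, let (Ω,𝓕,P) be a probability space, and for each x ∈ F let X(x) : Ω → M be a Borel-measurable random element of M. Let (D_n)_{n≥0} be an increasing sequence of finite subsets of F whose union D := ⋃_n D_n is dense in F, and let (δ_n)_{n≥0} be positive reals with Σ_n δ_n < ∞, satisfying condition (U): for every n ≥ 0 and every x ∈ D_{n+1} there exists y ∈ D_n with R(x,y) ≤ δ_{n+1}. Let r, q : (0,∞) → [0,∞) be non-decreasing functions satisfying condition (B): P( d(X(x),X(y)) > r(R(x,y)) ) ≤ q(R(x,y)) for all distinct x, y ∈ F. Set δ'_n := 2 Σ_{k≥n} δ_k and π_n := {(x,y) ∈ D_n × D_n : R(x,y) ≤ δ'_n}. Then for each n ≥ 0, P( sup{ d(X(x),X(y)) : x,y ∈ D, R(x,y) < δ_n } > 2 Σ_{k≥n} r(δ'_k) ) ≤ Σ_{k≥n} |π_k| · q(δ'_k). -/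
import Mathlib


open MeasureTheory Filter Set
open scoped ENNReal NNReal Topology

/-- Tail sum `δ'_m = 2 Σ_{k ≥ m} δ_k`. -/
noncomputable def tT (δ : ℕ → ℝ) (m : ℕ) : ℝ := 2 * ∑' j, δ (m + j)

/-- (Proposition: uniform continuity of stochastic processes, general index set.)
If the conditions (U) and (B) are satisfied, then for each `n`,
`P( sup_{x,y ∈ D, R(x,y) < δ_n} d(X(x),X(y)) > 2 Σ_{k ≥ n} r(δ'_k) ) ≤ Σ_{k ≥ n} |π_k| q(δ'_k)`,
where `δ'_m = 2 Σ_{k ≥ m} δ_k` and `π_m = {(x,y) ∈ D_m × D_m : R(x,y) ≤ δ'_m}`. -/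
theorem stmt0 {F M Ω : Type*} [MetricSpace F] [TopologicalSpace.SeparableSpace F]
    [MetricSpace M] [TopologicalSpace.SeparableSpace M] [MeasurableSpace M] [BorelSpace M]
    [MeasurableSpace Ω] (P : Measure Ω) [IsProbabilityMeasure P]
    (X : F → Ω → M) (hX : ∀ x, Measurable (X x))
    (D : ℕ → Finset F) (hD : Monotone D)
    (hdense : Dense (⋃ n, (D n : Set F)))
    (δ : ℕ → ℝ) (hδpos : ∀ n, 0 < δ n) (hδsum : Summable δ)
    (hU : ∀ n, ∀ x ∈ D (n + 1), ∃ y ∈ D n, dist x y ≤ δ (n + 1))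
    (r q : ℝ → ℝ)
    (hr0 : ∀ u, 0 < u → 0 ≤ r u) (hq0 : ∀ u, 0 < u → 0 ≤ q u)
    (hrmono : MonotoneOn r (Set.Ioi 0)) (hqmono : MonotoneOn q (Set.Ioi 0))
    (hB : ∀ x y : F, x ≠ y →
      P {ω | r (dist x y) < dist (X x ω) (X y ω)} ≤ ENNReal.ofReal (q (dist x y)))
    (n : ℕ) :
    P {ω | ∃ x ∈ ⋃ m, (D m : Set F), ∃ y ∈ ⋃ m, (D m : Set F),
        dist x y < δ n ∧
        2 * ∑' k : ℕ, ENNReal.ofReal (r (2 * ∑' j : ℕ, δ (n + k + j)))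
          < edist (X x ω) (X y ω)} ≤
      ∑' k : ℕ,
        (((D (n + k) ×ˢ D (n + k)).filter
            (fun p => dist p.1 p.2 ≤ 2 * ∑' j : ℕ, δ (n + k + j))).card : ℝ≥0∞) *
          ENNReal.ofReal (q (2 * ∑' j : ℕ, δ (n + k + j))) := by
  classical
  have hδ0 : ∀ m, 0 ≤ δ m := fun m => (hδpos m).le
  have hsumm : ∀ m : ℕ, Summable (fun j => δ (m + j)) :=
    fun m => hδsum.comp_injective (fun a b h => by omega)
  have hTrw : ∀ k : ℕ, (2 * ∑' j : ℕ, δ (n + k + j)) = tT δ (n + k) := fun _ => rfl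
  simp only [hTrw]
  have hTnn : ∀ m : ℕ, 0 ≤ ∑' j, δ (m + j) := fun m => tsum_nonneg fun j => hδ0 _
  have hTge : ∀ m, δ m ≤ ∑' j, δ (m + j) := by
    intro m
    simpa using Summable.le_tsum (hsumm m) 0 (fun j _ => hδ0 _)
  have hTpos : ∀ m, 0 < tT δ m := by
    intro m
    have h1 : 0 < ∑' j, δ (m + j) := lt_of_lt_of_le (hδpos m) (hTge m)
    simp only [tT]; linarith
  have hδleT : ∀ m, δ m ≤ tT δ m := by
    intro m
    have h1 := hTge m
    have h2 : 0 ≤ ∑' j, δ (m + j) := hTnn m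
    simp only [tT]; linarith
  have hTsucc : ∀ m : ℕ, (∑' j, δ (m + j)) = δ m + ∑' j, δ (m + 1 + j) := by
    intro m
    have h := Summable.tsum_eq_zero_add (hsumm m)
    simpa using h.trans (by
      congr 1
      exact tsum_congr fun j => by rw [show m + (j + 1) = m + 1 + j by ring])
  have hr0' : ∀ m, 0 ≤ r (tT δ m) := fun m => hr0 _ (hTpos m)
  have hsumtail : ∀ (N m : ℕ),
      (∑ k ∈ Finset.range N, δ (m + 1 + k)) ≤ ∑' j, δ (m + 1 + j) :=
    fun N m => Summable.sum_le_tsum (Finset.range N) (fun j _ => hδ0 _) (hsumm (m + 1))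
  -- the bad events
  set g : ℕ → ℝ≥0∞ := fun k => ENNReal.ofReal (r (tT δ (n + k))) with hg
  set Bad : ℕ → Set Ω := fun k =>
    ⋃ p ∈ ((D (n + k) ×ˢ D (n + k)).filter
        (fun p : F × F => dist p.1 p.2 ≤ tT δ (n + k) ∧ p.1 ≠ p.2)),
      {ω | r (tT δ (n + k)) < dist (X p.1 ω) (X p.2 ω)} with hBadDef
  have hincl : {ω | ∃ x ∈ ⋃ m, (D m : Set F), ∃ y ∈ ⋃ m, (D m : Set F),
      dist x y < δ n ∧ 2 * ∑' k, g k < edist (X x ω) (X y ω)} ⊆ ⋃ k, Bad k := by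
    intro ω hω
    by_contra hA
    rw [mem_iUnion] at hA
    push_neg at hA
    obtain ⟨x, hx, y, hy, hxy, hbig⟩ := hω
    -- deduce the pointwise control on all levels ≥ n
    have H : ∀ m, n ≤ m → ∀ u v : F, u ∈ D m → v ∈ D m → dist u v ≤ tT δ m →
        dist (X u ω) (X v ω) ≤ r (tT δ m) := by
      intro m hnm u v hu hv huv
      by_cases he : u = v
      · subst he; simpa using hr0' m
      · by_contra hlt
        push_neg at hlt
        apply hA (m - n)
        have hm : n + (m - n) = m := by omega
        simp only [hBadDef, hm]
        exact Set.mem_iUnion₂.2 ⟨(u, v),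
          Finset.mem_filter.2 ⟨Finset.mem_product.2 ⟨hu, hv⟩, huv, he⟩, hlt⟩
    -- chaining down to level n
    have chain : ∀ N (u : F), u ∈ D (n + N) → ∃ z ∈ D n,
        dist u z ≤ ∑ k ∈ Finset.range N, δ (n + 1 + k) ∧
        dist (X u ω) (X z ω) ≤ ∑ k ∈ Finset.range N, r (tT δ (n + 1 + k)) := by
      intro N
      induction N with
      | zero => exact fun u hu => ⟨u, hu, by simp, by simp⟩
      | succ N ih =>
        intro u hu
        obtain ⟨v, hv, huv⟩ := hU (n + N) u hu
        obtain ⟨z, hz, h1, h2⟩ := ih v hv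
        have hstep : dist (X u ω) (X v ω) ≤ r (tT δ (n + N + 1)) :=
          H (n + N + 1) (by omega) u v hu (hD (Nat.le_succ _) hv)
            (le_trans huv (hδleT _))
        have heq : n + 1 + N = n + N + 1 := by ring
        refine ⟨z, hz, ?_, ?_⟩
        · rw [Finset.sum_range_succ, heq]
          have t := dist_triangle u v z
          linarith
        · rw [Finset.sum_range_succ, heq]
          have t := dist_triangle (X u ω) (X v ω) (X z ω)
          linarith
    rw [mem_iUnion] at hx hy
    obtain ⟨a, hxa⟩ := hx
    obtain ⟨b, hyb⟩ := hy
    set N := max a b with hN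
    have hxN : x ∈ D (n + N) := hD (by omega) hxa
    have hyN : y ∈ D (n + N) := hD (by omega) hyb
    obtain ⟨zx, hzx, hx1, hx2⟩ := chain N x hxN
    obtain ⟨zy, hzy, hy1, hy2⟩ := chain N y hyN
    have hdzz : dist zx zy ≤ tT δ n := by
      have t1 : dist zx zy ≤ dist zx x + dist x y + dist y zy := dist_triangle4 _ _ _ _
      rw [dist_comm zx x] at t1
      have t2 := hsumtail N n
      have t3 := hTsucc n
      have t4 := hTnn (n + 1)
      have t5 := hδ0 n
      simp only [tT]
      linarith
    have hzz : dist (X zx ω) (X zy ω) ≤ r (tT δ n) := H n le_rfl zx zy hzx hzy hdzz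
    have hdX : dist (X x ω) (X y ω) ≤
        (∑ k ∈ Finset.range N, r (tT δ (n + 1 + k))) + r (tT δ n) +
        (∑ k ∈ Finset.range N, r (tT δ (n + 1 + k))) := by
      have t1 : dist (X x ω) (X y ω) ≤
          dist (X x ω) (X zx ω) + dist (X zx ω) (X zy ω) + dist (X zy ω) (X y ω) :=
        dist_triangle4 _ _ _ _
      rw [dist_comm (X zy ω)] at t1
      linarith
    have hS0 : 0 ≤ ∑ k ∈ Finset.range N, r (tT δ (n + 1 + k)) :=
      Finset.sum_nonneg fun k _ => hr0' _
    have hidx : ∀ k : ℕ, tT δ (n + 1 + k) = tT δ (n + (k + 1)) := fun k => by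
      rw [show n + 1 + k = n + (k + 1) by ring]
    have hfin : ∀ N' : ℕ, (∑ k ∈ Finset.range N', ENNReal.ofReal (r (tT δ (n + 1 + k)))) ≤
        ∑' k, g (k + 1) := by
      intro N'
      calc (∑ k ∈ Finset.range N', ENNReal.ofReal (r (tT δ (n + 1 + k))))
          = ∑ k ∈ Finset.range N', g (k + 1) := by
            refine Finset.sum_congr rfl fun k _ => ?_
            simp only [hg, hidx k]
        _ ≤ ∑' k, g (k + 1) := ENNReal.sum_le_tsum _
    have hub : edist (X x ω) (X y ω) ≤ 2 * ∑' k, g k := by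
      rw [edist_dist]
      calc ENNReal.ofReal (dist (X x ω) (X y ω))
          ≤ ENNReal.ofReal ((∑ k ∈ Finset.range N, r (tT δ (n + 1 + k))) + r (tT δ n) +
              (∑ k ∈ Finset.range N, r (tT δ (n + 1 + k)))) :=
            ENNReal.ofReal_le_ofReal hdX
        _ = (∑ k ∈ Finset.range N, ENNReal.ofReal (r (tT δ (n + 1 + k)))) + g 0 +
              (∑ k ∈ Finset.range N, ENNReal.ofReal (r (tT δ (n + 1 + k)))) := by
            rw [ENNReal.ofReal_add (add_nonneg hS0 (hr0' n)) hS0, ENNReal.ofReal_add hS0 (hr0' n),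
              ENNReal.ofReal_sum_of_nonneg (fun k _ => hr0' _)]
            simp [hg]
        _ ≤ (∑' k, g (k + 1)) + g 0 + (∑' k, g (k + 1)) := by
            gcongr
            · exact hfin N
            · exact hfin N
        _ ≤ 2 * ∑' k, g k := by
            have h0 : (∑' k, g k) = g 0 + ∑' k, g (k + 1) :=
              tsum_eq_zero_add' ENNReal.summable
            rw [two_mul, h0]
            calc (∑' k, g (k + 1)) + g 0 + (∑' k, g (k + 1))
                = (g 0 + ∑' k, g (k + 1)) + (∑' k, g (k + 1)) := by ring
              _ ≤ (g 0 + ∑' k, g (k + 1)) + (g 0 + ∑' k, g (k + 1)) :=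
                  add_le_add le_rfl le_add_self
    exact absurd hub hbig.not_ge
  refine le_trans (measure_mono hincl) ?_
  refine le_trans (measure_iUnion_le _) ?_
  refine ENNReal.tsum_le_tsum fun k => ?_
  simp only [hBadDef]
  refine le_trans (measure_biUnion_finset_le _ _) ?_
  set c : ℝ≥0∞ := ENNReal.ofReal (q (tT δ (n + k))) with hc
  have hterm : ∀ p ∈ ((D (n + k) ×ˢ D (n + k)).filter
      (fun p : F × F => dist p.1 p.2 ≤ tT δ (n + k) ∧ p.1 ≠ p.2)),
      P {ω | r (tT δ (n + k)) < dist (X p.1 ω) (X p.2 ω)} ≤ c := by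
    intro p hp
    obtain ⟨hmem, hdist, hne⟩ := Finset.mem_filter.1 hp
    have hdp : 0 < dist p.1 p.2 := dist_pos.2 hne
    have hsub : {ω | r (tT δ (n + k)) < dist (X p.1 ω) (X p.2 ω)} ⊆
        {ω | r (dist p.1 p.2) < dist (X p.1 ω) (X p.2 ω)} := fun ω h =>
      lt_of_le_of_lt (hrmono (Set.mem_Ioi.2 hdp) (Set.mem_Ioi.2 (hTpos _)) hdist) h
    calc P {ω | r (tT δ (n + k)) < dist (X p.1 ω) (X p.2 ω)}
        ≤ P {ω | r (dist p.1 p.2) < dist (X p.1 ω) (X p.2 ω)} := measure_mono hsub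
      _ ≤ ENNReal.ofReal (q (dist p.1 p.2)) := hB p.1 p.2 hne
      _ ≤ c := ENNReal.ofReal_le_ofReal
          (hqmono (Set.mem_Ioi.2 hdp) (Set.mem_Ioi.2 (hTpos _)) hdist)
  have hsubset : ((D (n + k) ×ˢ D (n + k)).filter
      (fun p : F × F => dist p.1 p.2 ≤ tT δ (n + k) ∧ p.1 ≠ p.2)) ⊆
      ((D (n + k) ×ˢ D (n + k)).filter
      (fun p : F × F => dist p.1 p.2 ≤ tT δ (n + k))) := by
    intro p hp
    obtain ⟨hmem, hdist, _⟩ := Finset.mem_filter.1 hp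
    exact Finset.mem_filter.2 ⟨hmem, hdist⟩
  calc (∑ p ∈ ((D (n + k) ×ˢ D (n + k)).filter
        (fun p : F × F => dist p.1 p.2 ≤ tT δ (n + k) ∧ p.1 ≠ p.2)),
        P {ω | r (tT δ (n + k)) < dist (X p.1 ω) (X p.2 ω)})
      ≤ ∑ _p ∈ ((D (n + k) ×ˢ D (n + k)).filter
        (fun p : F × F => dist p.1 p.2 ≤ tT δ (n + k) ∧ p.1 ≠ p.2)), c :=
        Finset.sum_le_sum hterm
    _ = (((D (n + k) ×ˢ D (n + k)).filter
        (fun p : F × F => dist p.1 p.2 ≤ tT δ (n + k) ∧ p.1 ≠ p.2)).card : ℝ≥0∞) * c := by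
        rw [Finset.sum_const, nsmul_eq_mul]
    _ ≤ (((D (n + k) ×ˢ D (n + k)).filter
        (fun p : F × F => dist p.1 p.2 ≤ tT δ (n + k))).card : ℝ≥0∞) * c := by
        have h := hsubset
        gcongr
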